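/- Every mapping produced by an RGX formula is hierarchical: for every RGX γ, document d, and μ ∈ ⟦γ⟧_d, and for all x, y ∈ dom(μ), either μ(x) is contained in μ(y), or μ(y) is contained in μ(x), or μ(x) and μ(y) are disjoint. -/
import Mathlib


/-- A mapping: a partial function from variables to spans (pairs of naturals). -/
abbrev Mapping (V : Type) : Type := V → Option (ℕ × ℕ)

/-- The domain of a mapping. -/
def Mapping.dom {V : Type} (μ : Mapping V) : Set V := {x | μ x ≠ none}

/-- Compatibility of two mappings: they agree on their common domain. -/
def Mapping.Compat {V : Type} (μ1 μ2 : Mapping V) : Prop :=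
  ∀ x, μ1 x ≠ none → μ2 x ≠ none → μ1 x = μ2 x

/-- Union of two mappings (left-biased; on compatible mappings this is the common extension). -/
def Mapping.union {V : Type} (μ1 μ2 : Mapping V) : Mapping V :=
  fun x => (μ1 x).orElse (fun _ => μ2 x)

/-- The empty mapping. -/
def Mapping.empty {V : Type} : Mapping V := fun _ => none

/-- The mapping defined only on `x`, with value `s`. -/
def Mapping.single {V : Type} [DecidableEq V] (x : V) (s : ℕ × ℕ) : Mapping V :=
  fun y => if y = x then some s else none

/-- `(i,j)` is a span of document `d` if `1 ≤ i ≤ j ≤ |d|+1`. -/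
def IsSpanOf {σ : Type} (d : List σ) (s : ℕ × ℕ) : Prop :=
  1 ≤ s.1 ∧ s.1 ≤ s.2 ∧ s.2 ≤ d.length + 1

/-- The content `d(i,j)` of a span: the substring from position `i` to `j-1`. -/
def content {σ : Type} (d : List σ) (s : ℕ × ℕ) : List σ :=
  (d.drop (s.1 - 1)).take (s.2 - s.1)

/-- Variable regex (RGX): `γ ::= ε | a | x{γ} | γ·γ | γ∨γ | γ*`. -/
inductive RGX (σ V : Type) : Type
  | eps : RGX σ V
  | ltr (a : σ) : RGX σ V
  | var (x : V) (γ : RGX σ V) : RGX σ V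
  | cat (γ1 γ2 : RGX σ V) : RGX σ V
  | alt (γ1 γ2 : RGX σ V) : RGX σ V
  | star (γ : RGX σ V) : RGX σ V

/-- The set of variables occurring in an RGX. -/
def RGX.vars {σ V : Type} : RGX σ V → Set V
  | .eps => ∅
  | .ltr _ => ∅
  | .var x γ => insert x γ.vars
  | .cat γ1 γ2 => γ1.vars ∪ γ2.vars
  | .alt γ1 γ2 => γ1.vars ∪ γ2.vars
  | .star γ => γ.vars

/-- The two-level semantics `⟦γ⟧^p_d` of Table 2: `PSem γ d s μ` means `(s,μ) ∈ ⟦γ⟧^p_d`. -/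
inductive PSem {σ V : Type} [DecidableEq V] : RGX σ V → List σ → (ℕ × ℕ) → Mapping V → Prop
  | eps {d : List σ} {s : ℕ × ℕ} : IsSpanOf d s → content d s = [] →
      PSem .eps d s Mapping.empty
  | ltr {d : List σ} {s : ℕ × ℕ} {a : σ} : IsSpanOf d s → content d s = [a] →
      PSem (.ltr a) d s Mapping.empty
  | var {R : RGX σ V} {d s μ'} {x : V} : PSem R d s μ' → μ' x = none →
      PSem (.var x R) d s (Mapping.union (Mapping.single x s) μ')
  | cat {R1 R2 : RGX σ V} {d : List σ} {i k j : ℕ} {μ1 μ2 : Mapping V} :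
      PSem R1 d (i, k) μ1 → PSem R2 d (k, j) μ2 →
      (∀ x, μ1 x = none ∨ μ2 x = none) →
      PSem (.cat R1 R2) d (i, j) (Mapping.union μ1 μ2)
  | altl {R1 R2 : RGX σ V} {d s μ} : PSem R1 d s μ → PSem (.alt R1 R2) d s μ
  | altr {R1 R2 : RGX σ V} {d s μ} : PSem R2 d s μ → PSem (.alt R1 R2) d s μ
  | star0 {R : RGX σ V} {d : List σ} {s : ℕ × ℕ} : IsSpanOf d s → content d s = [] →
      PSem (.star R) d s Mapping.empty
  | starS {R : RGX σ V} {d : List σ} {i k j : ℕ} {μ1 μ2 : Mapping V} :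
      PSem R d (i, k) μ1 → PSem (.star R) d (k, j) μ2 →
      (∀ x, μ1 x = none ∨ μ2 x = none) →
      PSem (.star R) d (i, j) (Mapping.union μ1 μ2)

/-- The semantics `⟦γ⟧_d`: mappings whose associated span is the whole document. -/
def sem {σ V : Type} [DecidableEq V] (γ : RGX σ V) (d : List σ) : Set (Mapping V) :=
  {μ | PSem γ d (1, d.length + 1) μ}

/-- The span `s` is contained in the span `t`. -/
def SpanContained (s t : ℕ × ℕ) : Prop := t.1 ≤ s.1 ∧ s.2 ≤ t.2

/-- The spans `s` and `t` are disjoint. -/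
def SpanDisjoint (s t : ℕ × ℕ) : Prop := s.2 ≤ t.1 ∨ t.2 ≤ s.1

lemma union_some {V : Type} {μ1 μ2 : Mapping V} {x : V} {s : ℕ × ℕ}
    (h : Mapping.union μ1 μ2 x = some s) : μ1 x = some s ∨ μ2 x = some s := by
  unfold Mapping.union at h
  cases h1 : μ1 x with
  | none => right; simpa [h1, Option.orElse] using h
  | some t => left; simpa [h1, Option.orElse] using h

lemma single_some {V : Type} [DecidableEq V] {x0 y : V} {s t : ℕ × ℕ}
    (h : Mapping.single x0 s y = some t) : y = x0 ∧ t = s := by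
  unfold Mapping.single at h
  split_ifs at h with hy
  exact ⟨hy, (Option.some_inj.mp h).symm⟩

lemma psem_le {σ V : Type} [DecidableEq V] {γ : RGX σ V} {d : List σ} {s : ℕ × ℕ}
    {μ : Mapping V} (h : PSem γ d s μ) : s.1 ≤ s.2 := by
  induction h with
  | eps hs _ => exact hs.2.1
  | ltr hs _ => exact hs.2.1
  | var _ _ ih => exact ih
  | cat _ _ _ ih1 ih2 => exact le_trans ih1 ih2
  | altl _ ih => exact ih
  | altr _ ih => exact ih
  | star0 hs _ => exact hs.2.1
  | starS _ _ _ ih1 ih2 => exact le_trans ih1 ih2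

lemma psem_contained {σ V : Type} [DecidableEq V] {γ : RGX σ V} {d : List σ} {s : ℕ × ℕ}
    {μ : Mapping V} (h : PSem γ d s μ) :
    ∀ x sx, μ x = some sx → SpanContained sx s := by
  induction h with
  | eps _ _ => intro x sx hx; exact absurd hx (by simp [Mapping.empty])
  | ltr _ _ => intro x sx hx; exact absurd hx (by simp [Mapping.empty])
  | var h1 _ ih =>
    intro x sx hx
    rcases union_some hx with h | h
    · obtain ⟨-, rfl⟩ := single_some h; exact ⟨le_refl _, le_refl _⟩
    · exact ih x sx h
  | cat h1 h2 _ ih1 ih2 =>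
    intro x sx hx
    rcases union_some hx with h | h
    · exact ⟨(ih1 x sx h).1, le_trans (ih1 x sx h).2 (psem_le h2)⟩
    · have hk := psem_le h1
      exact ⟨le_trans hk (ih2 x sx h).1, (ih2 x sx h).2⟩
  | altl _ ih => exact ih
  | altr _ ih => exact ih
  | star0 _ _ => intro x sx hx; exact absurd hx (by simp [Mapping.empty])
  | starS h1 h2 _ ih1 ih2 =>
    intro x sx hx
    rcases union_some hx with h | h
    · exact ⟨(ih1 x sx h).1, le_trans (ih1 x sx h).2 (psem_le h2)⟩
    · have hk := psem_le h1
      exact ⟨le_trans hk (ih2 x sx h).1, (ih2 x sx h).2⟩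

lemma psem_hier {σ V : Type} [DecidableEq V] {γ : RGX σ V} {d : List σ} {s : ℕ × ℕ}
    {μ : Mapping V} (h : PSem γ d s μ) :
    ∀ x y sx sy, μ x = some sx → μ y = some sy →
      SpanContained sx sy ∨ SpanContained sy sx ∨ SpanDisjoint sx sy := by
  induction h with
  | eps _ _ => intro x y sx sy hx hy; exact absurd hx (by simp [Mapping.empty])
  | ltr _ _ => intro x y sx sy hx hy; exact absurd hx (by simp [Mapping.empty])
  | var h1 _ ih =>
    intro x y sx sy hx hy
    rcases union_some hx with h | h <;> rcases union_some hy with h' | h'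
    · obtain ⟨-, rfl⟩ := single_some h; obtain ⟨-, rfl⟩ := single_some h'
      exact Or.inl ⟨le_refl _, le_refl _⟩
    · obtain ⟨-, rfl⟩ := single_some h
      exact Or.inr (Or.inl (psem_contained h1 y sy h'))
    · obtain ⟨-, rfl⟩ := single_some h'
      exact Or.inl (psem_contained h1 x sx h)
    · exact ih x y sx sy h h'
  | cat h1 h2 _ ih1 ih2 =>
    intro x y sx sy hx hy
    rcases union_some hx with h | h <;> rcases union_some hy with h' | h'
    · exact ih1 x y sx sy h h'
    · exact Or.inr (Or.inr (Or.inl (le_trans (psem_contained h1 x sx h).2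
        (psem_contained h2 y sy h').1)))
    · exact Or.inr (Or.inr (Or.inr (le_trans (psem_contained h1 y sy h').2
        (psem_contained h2 x sx h).1)))
    · exact ih2 x y sx sy h h'
  | altl _ ih => exact ih
  | altr _ ih => exact ih
  | star0 _ _ => intro x y sx sy hx hy; exact absurd hx (by simp [Mapping.empty])
  | starS h1 h2 _ ih1 ih2 =>
    intro x y sx sy hx hy
    rcases union_some hx with h | h <;> rcases union_some hy with h' | h'
    · exact ih1 x y sx sy h h'
    · exact Or.inr (Or.inr (Or.inl (le_trans (psem_contained h1 x sx h).2
        (psem_contained h2 y sy h').1)))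
    · exact Or.inr (Or.inr (Or.inr (le_trans (psem_contained h1 y sy h').2
        (psem_contained h2 x sx h).1)))
    · exact ih2 x y sx sy h h'

/-- Every mapping produced by an RGX formula is hierarchical: any two spans assigned to
variables in its domain are nested or disjoint. -/
theorem rgx_hierarchical {σ V : Type} [DecidableEq V]
    (γ : RGX σ V) (d : List σ) (μ : Mapping V) (hμ : μ ∈ sem γ d) :
    ∀ (x y : V) (sx sy : ℕ × ℕ), μ x = some sx → μ y = some sy →
      SpanContained sx sy ∨ SpanContained sy sx ∨ SpanDisjoint sx sy := by
  exact psem_hier hμ
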